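/- The function W(x,y) = (e^y - 1)²/(e^{y/2}√(e^{2y}-1)) on ℝ × (0,∞), being independent of x, satisfies W_{xx} + W_{yy} - P(y)W = 0, vanishes as y → 0+, and is an eigenfunction with eigenvalue 1 of the Laplacian Δ = P(y)^{-1}(∂_x² + ∂_y²) of the metric ds² = P(y)(dx²+dy²), i.e. ΔW = W. -/

import Mathlib

open Real Filter

noncomputable def P (y : ℝ) : ℝ :=
  (Real.exp (4*y) + 10 * Real.exp (2*y) + 1) / (4 * (Real.exp (2*y) - 1)^2)

noncomputable def W (x y : ℝ) : ℝ :=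
  (Real.exp y - 1)^2 / (Real.exp (y/2) * Real.sqrt (Real.exp (2*y) - 1))

/-!
For `y > 0` the logarithmic derivative of `W` in `y` is the rational function
`L = (e^{2y} + 4e^y + 1) / (2(e^{2y} - 1))` of `e^y`, and `L` solves the Riccati equation
`L' + L² = P`. Hence `W_yy = (L' + L²) W = P W`, while `W_xx = 0`, so `ΔW = W`.
For the boundary behaviour, `W = (e^y - 1)^{3/2} / (e^{y/2} √(e^y + 1))` on `y > 0`,
and the right-hand side is continuous and vanishes at `0`.
-/

open Topology

theorem deriv_deriv_eq_of_hasDerivAt_mul_self {𝕜 : Type*} [NontriviallyNormedField 𝕜]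
    {f u : 𝕜 → 𝕜} {y u' : 𝕜}
    (hf : ∀ᶠ z in 𝓝 y, HasDerivAt f (u z * f z) z) (hu : HasDerivAt u u' y) :
    deriv (deriv f) y = (u' + u y ^ 2) * f y := by
  have hderiv : deriv f =ᶠ[𝓝 y] fun z => u z * f z := hf.mono fun _ hz => hz.deriv
  rw [hderiv.deriv_eq, (hu.fun_mul hf.self_of_nhds).deriv]
  ring

lemma exp_two_mul_eq_sq (y : ℝ) : exp (2*y) = exp y ^ 2 := by
  rw [← exp_nat_mul]; norm_num

lemma exp_two_mul_sub_one_pos {y : ℝ} (hy : 0 < y) : 0 < exp (2*y) - 1 := by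
  simpa using one_lt_exp_iff.mpr (by positivity : 0 < 2*y)

lemma exp_two_mul_sub_one_ne_zero {y : ℝ} (hy : y ≠ 0) : exp (2*y) - 1 ≠ 0 := by
  simpa [sub_eq_zero] using hy

lemma hasDerivAt_exp_two_mul (y : ℝ) : HasDerivAt (fun y => exp (2*y)) (2 * exp (2*y)) y := by
  simpa [mul_comm] using ((hasDerivAt_id y).const_mul 2).exp

lemma P_pos {y : ℝ} (hy : y ≠ 0) : 0 < P y := by
  have := exp_two_mul_sub_one_ne_zero hy
  unfold P; positivity

noncomputable def logDerivW (y : ℝ) : ℝ :=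
  (exp (2*y) + 4 * exp y + 1) / (2 * (exp (2*y) - 1))

lemma hasDerivAt_logDerivW {y : ℝ} (hy : y ≠ 0) :
    HasDerivAt logDerivW (P y - logDerivW y ^ 2) y := by
  have hd := exp_two_mul_sub_one_ne_zero hy
  have hE := hasDerivAt_exp_two_mul y
  refine ((hE.fun_add ((hasDerivAt_exp y).const_mul 4)).add_const 1 |>.fun_div
    ((hE.sub_const 1).const_mul 2) (mul_ne_zero two_ne_zero hd)).congr_deriv ?_
  rw [exp_two_mul_eq_sq] at hd
  rw [P, logDerivW, show 4*y = 2*y + 2*y by ring, exp_add, exp_two_mul_eq_sq]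
  field_simp
  ring

lemma hasDerivAt_W {x y : ℝ} (hy : 0 < y) :
    HasDerivAt (fun y' => W x y') (logDerivW y * W x y) y := by
  have hd := exp_two_mul_sub_one_pos hy
  have hN : HasDerivAt (fun y => (exp y - 1)^2) (2 * (exp y - 1) * exp y) y := by
    simpa using ((hasDerivAt_exp y).sub_const 1).fun_pow 2
  have hb : HasDerivAt (fun y => exp (y/2)) (exp (y/2) / 2) y := by
    simpa [div_eq_mul_inv, mul_comm] using ((hasDerivAt_id y).div_const 2).exp
  have hs := ((hasDerivAt_exp_two_mul y).sub_const 1).sqrt hd.ne'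
  refine (hN.fun_div (hb.fun_mul hs) (by positivity)).congr_deriv ?_
  have hs2 := sq_sqrt hd.le
  have hs0 : sqrt (exp (2*y) - 1) ≠ 0 := by positivity
  rw [exp_two_mul_eq_sq] at hd hs2 hs0
  rw [W, logDerivW, exp_two_mul_eq_sq]
  field_simp
  rw [hs2]
  ring

lemma deriv_deriv_W_fst (x y : ℝ) : deriv (deriv fun x' => W x' y) x = 0 := by
  show deriv (deriv fun _ => W 0 y) x = 0
  simp

lemma deriv_deriv_W_snd {x y : ℝ} (hy : 0 < y) :
    deriv (deriv fun y' => W x y') y = P y * W x y := by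
  rw [deriv_deriv_eq_of_hasDerivAt_mul_self
    (eventually_gt_nhds hy |>.mono fun _ hz => hasDerivAt_W hz) (hasDerivAt_logDerivW hy.ne')]
  ring

lemma W_eq_sqrt_pow_three {x y : ℝ} (hy : 0 < y) :
    W x y = sqrt (exp y - 1) ^ 3 / (exp (y/2) * sqrt (exp y + 1)) := by
  have hm : 0 < exp y - 1 := by simpa using one_lt_exp_iff.mpr hy
  have hsm := sq_sqrt hm.le
  have : sqrt (exp y - 1) ≠ 0 := by positivity
  rw [W, exp_two_mul_eq_sq, show exp y ^ 2 - 1 = (exp y - 1) * (exp y + 1) by ring,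
    sqrt_mul hm.le]
  field_simp
  linear_combination -(sqrt (exp y - 1) ^ 2 + (exp y - 1)) * hsm

lemma tendsto_W_nhdsGT_zero (x : ℝ) : Tendsto (fun y => W x y) (𝓝[>] 0) (𝓝 0) := by
  have hcont : Continuous fun y => sqrt (exp y - 1) ^ 3 / (exp (y/2) * sqrt (exp y + 1)) :=
    .div (by fun_prop) (by fun_prop) fun y => by positivity
  refine (tendsto_nhdsWithin_of_tendsto_nhds (hcont.tendsto' 0 0 (by simp))).congr' ?_
  filter_upwards [self_mem_nhdsWithin] with y hy using (W_eq_sqrt_pow_three hy).symm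

theorem stmt_6 :
    (∀ x y : ℝ, 0 < y →
      deriv (deriv (fun x' => W x' y)) x + deriv (deriv (fun y' => W x y')) y
        - P y * W x y = 0) ∧
    (∀ x : ℝ, Tendsto (fun y => W x y) (nhdsWithin 0 (Set.Ioi 0)) (nhds 0)) ∧
    (∀ x y : ℝ, 0 < y →
      (P y)⁻¹ * (deriv (deriv (fun x' => W x' y)) x +
        deriv (deriv (fun y' => W x y')) y) = W x y) := by
  refine ⟨fun x y hy => ?_, tendsto_W_nhdsGT_zero, fun x y hy => ?_⟩
  · rw [deriv_deriv_W_fst, deriv_deriv_W_snd hy]; ring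
  · rw [deriv_deriv_W_fst, deriv_deriv_W_snd hy, zero_add,
      inv_mul_cancel_left₀ (P_pos hy.ne').ne']
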